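/- Let T be a tournament, and suppose C ⊆ V(T) satisfies χ⃗(T[C]) ≥ 2c and |C| ≤ s. If χ⃗(T) ≥ c·2^s + s + 1, then there exist sets A, B ⊆ V(T) with χ⃗(T[A]) ≥ c, χ⃗(T[B]) ≥ c, and every arc between A and B goes from A to B. -/

import Mathlib

variable {V : Type*}

/-- A tournament: an asymmetric, total relation. -/
def IsTournament (A : V → V → Prop) : Prop :=
  (∀ u v, A u v → ¬ A v u) ∧ (∀ u v, u ≠ v → A u v ∨ A v u)

/-- For an arc `e = uv`, `N(e) = N⁺(v) ∩ N⁻(u)`: vertices `w` with `v → w → u`. -/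
def ArcNbhd (A : V → V → Prop) (u v : V) : Set V := {w | A v w ∧ A w u}

/-- `S` induces an acyclic subdigraph. -/
def AcyclicOn (A : V → V → Prop) (S : Set V) : Prop :=
  ∀ v, ¬ Relation.TransGen (fun x y => x ∈ S ∧ y ∈ S ∧ A x y) v v

/-- The (di)chromatic number of the subdigraph induced on `S` is at most `k`:
`S` is covered by `k` sets, each inducing an acyclic subdigraph. -/
def ChromLE (A : V → V → Prop) (S : Set V) (k : ℕ) : Prop :=
  ∃ C : Fin k → Set V, (∀ v ∈ S, ∃ i, v ∈ C i) ∧ ∀ i, AcyclicOn A (C i ∩ S)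

/-- The (di)chromatic number of the subdigraph induced on `S` is at least `k`. -/
def ChromGE (A : V → V → Prop) (S : Set V) (k : ℕ) : Prop :=
  ∀ m, ChromLE A S m → k ≤ m

/-- Every arc neighborhood has chromatic number at most `t`. -/
def ArcBounded (A : V → V → Prop) (t : ℕ) : Prop :=
  ∀ u v, A u v → ChromLE A (ArcNbhd A u v) t

/-- `P 0, P 1, …, P k` is a directed walk/path. -/
def IsPathOn (A : V → V → Prop) (P : ℕ → V) (k : ℕ) : Prop :=
  ∀ i < k, A (P i) (P (i + 1))

/-- `P 0, …, P k` is a shortest directed path from `P 0` to `P k`. -/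
def IsShortestPath (A : V → V → Prop) (P : ℕ → V) (k : ℕ) : Prop :=
  IsPathOn A P k ∧
    ∀ (m : ℕ) (Q : ℕ → V), Q 0 = P 0 → Q m = P k → IsPathOn A Q m → k ≤ m

def StronglyConnected (A : V → V → Prop) : Prop :=
  ∀ u v : V, Relation.ReflTransGen A u v

def StronglyConnectedOn (A : V → V → Prop) (S : Set V) : Prop :=
  ∀ u ∈ S, ∀ v ∈ S, Relation.ReflTransGen (fun x y => x ∈ S ∧ y ∈ S ∧ A x y) u v

/-!
Split `V(T) \ C` into at most `2 ^ |C|` classes according to the out-neighbourhood of a vertex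
in `C`. Together with `C` itself (coloured by singletons) these cover `T`, so some class `S` has
chromatic number at least `c`. If `S` is the class with out-neighbourhood `D ⊆ C`, then `S` is
complete to `D` and `C \ D` is complete to `S`; since `χ(C) ≥ 2c`, one of `D`, `C \ D` has
chromatic number at least `c`.
-/

section Chromatic

variable {A : V → V → Prop}

lemma AcyclicOn.mono {S S' : Set V} (hS : AcyclicOn A S) (h : S' ⊆ S) : AcyclicOn A S' :=
  fun v hv => hS v (Relation.TransGen.mono (fun _ _ hxy => ⟨h hxy.1, h hxy.2.1, hxy.2.2⟩) v v hv)

lemma acyclicOn_of_forall_not_arc {S : Set V} (h : ∀ x ∈ S, ∀ y ∈ S, ¬ A x y) :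
    AcyclicOn A S := by
  intro v hv
  cases hv with
  | single hvv => exact h _ hvv.1 _ hvv.2.1 hvv.2.2
  | tail _ hlast => exact h _ hlast.1 _ hlast.2.1 hlast.2.2

lemma chromLE_empty (k : ℕ) : ChromLE A ∅ k :=
  ⟨fun _ => ∅, fun _ hv => hv.elim, fun _ => acyclicOn_of_forall_not_arc fun _ hx => hx.1.elim⟩

lemma chromLE_singleton (hA : ∀ x, ¬ A x x) (x : V) : ChromLE A {x} 1 :=
  ⟨fun _ => {x}, fun _ hv => ⟨0, hv⟩,
    fun _ => acyclicOn_of_forall_not_arc fun y hy z hz => by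
      rw [hy.1, hz.1]
      exact hA x⟩

lemma ChromLE.subset {S S' : Set V} {k : ℕ} (hS : ChromLE A S k) (h : S' ⊆ S) :
    ChromLE A S' k := by
  obtain ⟨C, cover, acyclic⟩ := hS
  exact ⟨C, fun v hv => cover v (h hv), fun i => (acyclic i).mono (Set.inter_subset_inter_right _ h)⟩

lemma ChromLE.union {S S' : Set V} {m n : ℕ} (hS : ChromLE A S m) (hS' : ChromLE A S' n) :
    ChromLE A (S ∪ S') (m + n) := by
  obtain ⟨C, cover, acyclic⟩ := hS
  obtain ⟨C', cover', acyclic'⟩ := hS'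
  refine ⟨Fin.append (fun i => C i ∩ S) (fun j => C' j ∩ S'), ?_, ?_⟩
  · rintro v (hv | hv)
    · obtain ⟨i, hi⟩ := cover v hv
      exact ⟨Fin.castAdd n i, by simpa using ⟨hi, hv⟩⟩
    · obtain ⟨j, hj⟩ := cover' v hv
      exact ⟨Fin.natAdd m j, by simpa using ⟨hj, hv⟩⟩
  · refine Fin.addCases (fun i => ?_) (fun j => ?_)
    · simpa using (acyclic i).mono fun x hx => ⟨hx.1.1, hx.1.2⟩
    · simpa using (acyclic' j).mono fun x hx => ⟨hx.1.1, hx.1.2⟩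

lemma ChromLE.mono {S : Set V} {m n : ℕ} (hS : ChromLE A S m) (h : m ≤ n) : ChromLE A S n := by
  obtain ⟨k, rfl⟩ := Nat.exists_eq_add_of_le h
  simpa using hS.union (chromLE_empty k)

lemma chromLE_biUnion {ι : Type*} (s : Finset ι) (S : ι → Set V) {k : ℕ}
    (h : ∀ i ∈ s, ChromLE A (S i) k) : ChromLE A (⋃ i ∈ s, S i) (s.card * k) := by
  classical
  induction s using Finset.induction_on with
  | empty => simpa using chromLE_empty 0
  | insert a s ha ih =>
    rw [Finset.set_biUnion_insert, Finset.card_insert_of_notMem ha, add_one_mul, add_comm]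
    exact (h a (s.mem_insert_self a)).union (ih fun i hi => h i (Finset.mem_insert_of_mem hi))

lemma chromLE_finset (hA : ∀ x, ¬ A x x) (C : Finset V) : ChromLE A ↑C C.card := by
  have h := chromLE_biUnion C (fun x => {x}) fun x _ => chromLE_singleton hA x
  rwa [← Finset.set_biUnion_coe, Set.biUnion_of_singleton, mul_one] at h

lemma chromLE_pred_of_not_chromGE {S : Set V} {c : ℕ} (h : ¬ ChromGE A S c) :
    ChromLE A S (c - 1) := by
  obtain ⟨m, hm, hmc⟩ : ∃ m, ChromLE A S m ∧ m < c := by simpa [ChromGE] using h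
  exact hm.mono (by omega)

lemma ChromGE.union {S S' : Set V} {a b : ℕ} (h : ChromGE A (S ∪ S') (a + b)) :
    ChromGE A S a ∨ ChromGE A S' b := by
  by_contra! hab
  obtain ⟨m, hm, hma⟩ : ∃ m, ChromLE A S m ∧ m < a := by simpa [ChromGE] using hab.1
  obtain ⟨n, hn, hnb⟩ : ∃ n, ChromLE A S' n ∧ n < b := by simpa [ChromGE] using hab.2
  have := h _ (hm.union hn)
  omega

end Chromatic

lemma IsTournament.irrefl {A : V → V → Prop} (hT : IsTournament A) (x : V) : ¬ A x x :=
  fun h => hT.1 x x h h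

def OutClass (A : V → V → Prop) (C D : Finset V) : Set V :=
  {w | w ∉ C ∧ ∀ x ∈ C, A w x ↔ x ∈ D}

section OutClass

variable {A : V → V → Prop} {C D : Finset V} {a b : V}

lemma univ_subset_union_outClass (A : V → V → Prop) (C : Finset V) :
    Set.univ ⊆ ↑C ∪ ⋃ D ∈ C.powerset, OutClass A C D := by
  classical
  intro w _
  by_cases hw : w ∈ C
  · exact Or.inl hw
  · refine Or.inr (Set.mem_biUnion (x := C.filter (A w)) ?_ ⟨hw, fun x hx => ?_⟩)
    · exact Finset.mem_powerset.2 (Finset.filter_subset _ _)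
    · simp [hx]

lemma chromLE_univ_of_outClass (hA : ∀ x, ¬ A x x) {k : ℕ}
    (h : ∀ D ∈ C.powerset, ChromLE A (OutClass A C D) k) :
    ChromLE A Set.univ (C.card + 2 ^ C.card * k) := by
  rw [← Finset.card_powerset]
  exact ((chromLE_finset hA C).union (chromLE_biUnion _ _ h)).subset
    (univ_subset_union_outClass A C)

lemma exists_outClass_chromGE (hA : ∀ x, ¬ A x x) {c s : ℕ} (hCcard : C.card ≤ s)
    (hchi : ChromGE A Set.univ (c * 2 ^ s + s + 1)) :
    ∃ D ⊆ C, ChromGE A (OutClass A C D) c := by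
  by_contra! h
  have hle := hchi _ (chromLE_univ_of_outClass hA fun D hD =>
    chromLE_pred_of_not_chromGE (h D (Finset.mem_powerset.1 hD)))
  have : 2 ^ C.card * (c - 1) ≤ 2 ^ s * c :=
    Nat.mul_le_mul (Nat.pow_le_pow_right two_pos hCcard) (Nat.sub_le c 1)
  rw [mul_comm c] at hle
  omega

lemma IsTournament.arc_of_mem_outClass (hT : IsTournament A) (hDC : D ⊆ C)
    (ha : a ∈ OutClass A C D) (hb : b ∈ D) : A a b ∧ ¬ A b a :=
  have hab := (ha.2 b (hDC hb)).2 hb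
  ⟨hab, hT.1 a b hab⟩

lemma IsTournament.arc_of_mem_sdiff [DecidableEq V] (hT : IsTournament A) (ha : a ∈ C \ D)
    (hb : b ∈ OutClass A C D) : A a b ∧ ¬ A b a := by
  obtain ⟨haC, haD⟩ := Finset.mem_sdiff.1 ha
  have hba : ¬ A b a := fun h => haD ((hb.2 a haC).1 h)
  have hab : a ≠ b := fun h => hb.1 (h ▸ haC)
  exact ⟨(hT.2 a b hab).resolve_right hba, hba⟩

end OutClass

theorem stmt11 (A : V → V → Prop) (hT : IsTournament A) (c s : ℕ) (C : Finset V)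
    (hCchrom : ChromGE A ↑C (2 * c)) (hCcard : C.card ≤ s)
    (hchi : ChromGE A Set.univ (c * 2 ^ s + s + 1)) :
    ∃ Aset Bset : Set V, ChromGE A Aset c ∧ ChromGE A Bset c ∧
      ∀ a ∈ Aset, ∀ b ∈ Bset, A a b ∧ ¬ A b a := by
  classical
  obtain ⟨D, hDC, hD⟩ := exists_outClass_chromGE hT.irrefl hCcard hchi
  have hsplit : ChromGE A ↑D c ∨ ChromGE A ↑(C \ D) c := by
    rw [Finset.coe_sdiff]
    refine ChromGE.union ?_
    rwa [Set.union_sdiff_cancel (Finset.coe_subset.2 hDC), ← two_mul]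
  rcases hsplit with hDchrom | hCDchrom
  · exact ⟨OutClass A C D, D, hD, hDchrom, fun a ha b hb => hT.arc_of_mem_outClass hDC ha hb⟩
  · exact ⟨↑(C \ D), OutClass A C D, hCDchrom, hD, fun a ha b hb => hT.arc_of_mem_sdiff ha hb⟩
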